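/- If S and T are bounded self-adjoint operators on a Hilbert space, then the Hausdorff distance between their spectra is at most the operator norm of their difference: d_H(σ(S), σ(T)) ≤ ‖S − T‖. -/
import Mathlib

open Metric in
private lemma key_resolvent {H : Type*} [NormedAddCommGroup H] [InnerProductSpace ℂ H]
    [CompleteSpace H] (S T : H →L[ℂ] H) (hT : IsSelfAdjoint T) (z : ℂ)
    (hz : ‖S - T‖ < Metric.infDist z (spectrum ℂ T)) : z ∉ spectrum ℂ S := by
  intro hzS
  have hT' : IsStarNormal T := hT.isStarNormal
  set d := Metric.infDist z (spectrum ℂ T) with hd_def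
  have hd : 0 < d := (norm_nonneg _).trans_lt hz
  have hbd : ∀ x ∈ spectrum ℂ T, d ≤ ‖z - x‖ := fun x hx => by
    simpa [dist_eq_norm] using Metric.infDist_le_dist_of_mem (x := z) hx
  have hne : ∀ x ∈ spectrum ℂ T, z - x ≠ 0 := fun x hx h0 => by
    have := hbd x hx; rw [h0, norm_zero] at this; exact hd.not_ge this
  -- the unit z - T
  have hcont : ContinuousOn (fun x : ℂ => z - x) (spectrum ℂ T) := by fun_prop
  have hval : cfc (fun x : ℂ => z - x) T = algebraMap ℂ (H →L[ℂ] H) z - T := by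
    have h := cfc_sub (fun _ : ℂ => z) id T (by fun_prop) (by fun_prop)
    simp only [id] at h
    rw [h, cfc_const z T, cfc_id ℂ T]
  have hu : IsUnit (algebraMap ℂ (H →L[ℂ] H) z - T) := by
    rw [← hval]
    exact ⟨cfcUnits (fun x : ℂ => z - x) T hne, rfl⟩
  set B : H →L[ℂ] H := cfc (fun x : ℂ => (z - x)⁻¹) T with hB_def
  have hBinv : B = Ring.inverse (algebraMap ℂ (H →L[ℂ] H) z - T) := by
    rw [hB_def, cfc_inv (fun x : ℂ => z - x) T hne, hval]
  have hBnorm : ‖B‖ ≤ d⁻¹ := by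
    apply norm_cfc_le (by positivity)
    intro x hx
    rw [norm_inv]
    exact inv_anti₀ hd (hbd x hx)
  have hsmall : ‖B * (S - T)‖ < 1 := by
    calc ‖B * (S - T)‖ ≤ ‖B‖ * ‖S - T‖ := norm_mul_le _ _
      _ ≤ d⁻¹ * ‖S - T‖ := by
          apply mul_le_mul_of_nonneg_right hBnorm (norm_nonneg _)
      _ < d⁻¹ * d := by
          apply mul_lt_mul_of_pos_left hz (by positivity)
      _ = 1 := inv_mul_cancel₀ hd.ne'
  have hunit2 : IsUnit (1 - B * (S - T)) := isUnit_one_sub_of_norm_lt_one hsmall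
  have hfact : algebraMap ℂ (H →L[ℂ] H) z - S
      = (algebraMap ℂ (H →L[ℂ] H) z - T) * (1 - B * (S - T)) := by
    have hmul : (algebraMap ℂ (H →L[ℂ] H) z - T) * B = 1 := by
      rw [hBinv, Ring.mul_inverse_cancel _ hu]
    rw [mul_sub, mul_one, ← mul_assoc, hmul, one_mul]
    abel
  exact (spectrum.mem_iff.mp hzS) (hfact ▸ hu.mul hunit2)

theorem spectrum_hausdorffDist_le_norm_sub
    {H : Type*} [NormedAddCommGroup H] [InnerProductSpace ℂ H] [CompleteSpace H]
    (S T : H →L[ℂ] H) (hS : IsSelfAdjoint S) (hT : IsSelfAdjoint T) :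
    Metric.hausdorffDist (spectrum ℂ S) (spectrum ℂ T) ≤ ‖S - T‖ := by
  by_cases hH : Nontrivial H
  · have : Nontrivial (H →L[ℂ] H) := ⟨0, 1, fun h => by
      obtain ⟨x, hx⟩ := exists_ne (0 : H)
      exact hx (by simpa using congrFun (congrArg DFunLike.coe h.symm) x)⟩
    have main : ∀ (A B : H →L[ℂ] H), IsSelfAdjoint B →
        ∀ z ∈ spectrum ℂ A, ∃ w ∈ spectrum ℂ B, dist z w ≤ ‖A - B‖ := by
      intro A B hB z hz
      have hinf : Metric.infDist z (spectrum ℂ B) ≤ ‖A - B‖ := by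
        by_contra h
        exact key_resolvent A B hB z (not_le.mp h) hz
      obtain ⟨w, hw, hdist⟩ := (spectrum.isCompact B).exists_infDist_eq_dist
        (spectrum.nonempty B) z
      exact ⟨w, hw, hdist ▸ hinf⟩
    refine Metric.hausdorffDist_le_of_mem_dist (norm_nonneg _) (main S T hT) ?_
    intro z hz
    obtain ⟨w, hw, h⟩ := main T S hS z hz
    exact ⟨w, hw, by rwa [norm_sub_rev] at h⟩
  · have : Subsingleton H := not_nontrivial_iff_subsingleton.mp hH
    have h1 : spectrum ℂ S = ∅ := by
      ext z; simp only [Set.mem_empty_iff_false, iff_false, spectrum.mem_iff, not_not]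
      exact isUnit_of_subsingleton _
    rw [h1, Metric.hausdorffDist_empty']
    exact norm_nonneg _
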